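/- arXiv:1411.1972 — 4 statements merged into one kernel-verified Lean document; each statement's English description precedes it below -/
import Mathlib

section
/- For every even positive integer n, there exists a bilinear algorithm of length n³/2 + 3n² for MM(n,n,n) over any field F. Equivalently, the bilinear rank r_F(n,n,n) satisfies r_F(n,n,n) ≤ n³/2 + 3n² for all even n. -/
open Matrix BigOperators

/-- A bilinear algorithm of length `R` for multiplying an `m × k` matrix by a
`k × n` matrix over the field `F`: a triple of families of coefficient matrices
`u`, `v`, `w` such that every entry of the product `A * B` is the corresponding
`w`-weighted sum of the `R` bilinear products. -/
def IsBilinearAlgorithm (F : Type*) [Field F] (m k n R : ℕ)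
    (u : Fin R → Matrix (Fin m) (Fin k) F)
    (v : Fin R → Matrix (Fin k) (Fin n) F)
    (w : Fin R → Matrix (Fin m) (Fin n) F) : Prop :=
  ∀ (A : Matrix (Fin m) (Fin k) F) (B : Matrix (Fin k) (Fin n) F)
    (l : Fin m) (q : Fin n),
    (A * B) l q =
      ∑ s : Fin R, w s l q * (∑ i : Fin m, ∑ j : Fin k, u s i j * A i j)
        * (∑ g : Fin k, ∑ h : Fin n, v s g h * B g h)

/-- The bilinear rank `r_F(m,k,n)`: the least length of a bilinear algorithm
for `MM(m,k,n)` over `F`. -/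
noncomputable def bilinearRank (F : Type*) [Field F] (m k n : ℕ) : ℕ :=
  sInf {R : ℕ | ∃ u v w, IsBilinearAlgorithm F m k n R u v w}

namespace MMEvenAux

variable {F : Type*} [Field F] {m : ℕ}

abbrev I (m : ℕ) : Type := ZMod 2 × Fin m

def br (t : I m) : I m := (t.1 + 1, t.2)

@[simp] lemma br_mk (p : ZMod 2) (x : Fin m) : br ((p, x) : I m) = (p + 1, x) := rfl
@[simp] lemma br_fst (t : I m) : (br t).1 = t.1 + 1 := rfl
@[simp] lemma br_snd (t : I m) : (br t).2 = t.2 := rfl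

@[simp] lemma br_br (t : I m) : br (br t) = t := by
  obtain ⟨p, x⟩ := t
  have h : ∀ a : ZMod 2, a + 1 + 1 = a := by decide
  simp [br, h]

@[simp] lemma br_eq {x y : I m} : br x = y ↔ x = br y := by
  constructor
  · rintro rfl; rw [br_br]
  · rintro rfl; rw [br_br]

@[simp] lemma z00 : ((0 : ZMod 2) + 0) = 0 := by decide
@[simp] lemma z01 : ((0 : ZMod 2) + 1) = 1 := by decide
@[simp] lemma z10 : ((1 : ZMod 2) + 0) = 1 := by decide
@[simp] lemma z11 : ((1 : ZMod 2) + 1) = 0 := by decide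
@[simp] lemma ze01 : (((0 : ZMod 2) = 1)) = False := by decide
@[simp] lemma ze10 : (((1 : ZMod 2) = 0)) = False := by decide
@[simp] lemma zr1 (a b : ZMod 2) : a + 1 + b + 1 = a + b := by revert a b; decide
@[simp] lemma zr2 (a b : ZMod 2) : a + (a + b) = b := by revert a b; decide
@[simp] lemma zr3 (a b : ZMod 2) : a + 1 + (b + 1) = b + a := by revert a b; decide

lemma zsum_expand (f : ZMod 2 → F) :
    (∑ p : ZMod 2, f p) = f 0 + f 1 := by
  have h : (Finset.univ : Finset (ZMod 2)) = {0, 1} := by decide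
  rw [h, Finset.sum_insert (by decide), Finset.sum_singleton]

lemma zsum_univ (r : ZMod 2) (f : ZMod 2 → F) :
    (∑ p : ZMod 2, f p) = f r + f (r + 1) := by
  have h : ∀ r : ZMod 2, (Finset.univ : Finset (ZMod 2)) = {r, r + 1} := by decide
  have h2 : ∀ r : ZMod 2, r ∉ ({r + 1} : Finset (ZMod 2)) := by decide
  rw [h r, Finset.sum_insert (h2 r), Finset.sum_singleton]

@[simp] lemma zsumA (c d : ZMod 2) (g : ZMod 2 → F) :
    (∑ p : ZMod 2, if c + p = d then g p else 0) = g (c + d) := by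
  have hc : c = 0 ∨ c = 1 := by revert c; decide
  have hd : d = 0 ∨ d = 1 := by revert d; decide
  rcases hc with rfl | rfl <;> rcases hd with rfl | rfl <;>
    rw [zsum_expand] <;> simp

@[simp] lemma zsumB (c d : ZMod 2) (g : ZMod 2 → F) :
    (∑ p : ZMod 2, if p + c = d then g p else 0) = g (d + c) := by
  have hc : c = 0 ∨ c = 1 := by revert c; decide
  have hd : d = 0 ∨ d = 1 := by revert d; decide
  rcases hc with rfl | rfl <;> rcases hd with rfl | rfl <;>
    rw [zsum_expand] <;> simp

@[simp] lemma zsumC (c d : ZMod 2) (g : ZMod 2 → F) :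
    (∑ p : ZMod 2, if c + p + 1 = d then g p else 0) = g (c + d + 1) := by
  have hc : c = 0 ∨ c = 1 := by revert c; decide
  have hd : d = 0 ∨ d = 1 := by revert d; decide
  rcases hc with rfl | rfl <;> rcases hd with rfl | rfl <;>
    rw [zsum_expand] <;> simp

@[simp] lemma zsumC' (c d : ZMod 2) (g : ZMod 2 → F) :
    (∑ p : ZMod 2, if p + c + 1 = d then g p else 0) = g (c + d + 1) := by
  have hc : c = 0 ∨ c = 1 := by revert c; decide
  have hd : d = 0 ∨ d = 1 := by revert d; decide
  rcases hc with rfl | rfl <;> rcases hd with rfl | rfl <;>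
    rw [zsum_expand] <;> simp

@[simp] lemma pair_eq (p : ZMod 2) (z : Fin m) (q : I m) :
    ((((p, z) : I m)) = q) ↔ (p = q.1 ∧ z = q.2) := by
  obtain ⟨a, b⟩ := q; simp [Prod.ext_iff]

@[simp] lemma pair_eq' (p : ZMod 2) (z : Fin m) (q : I m) :
    (q = ((p, z) : I m)) ↔ (q.1 = p ∧ q.2 = z) := by
  obtain ⟨a, b⟩ := q; simp [Prod.ext_iff]

def δ (i j : I m) : Matrix (I m) (I m) F :=
  Matrix.of fun a b => if i = a ∧ j = b then 1 else 0

@[simp] lemma δ_apply (i j a b : I m) :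
    (δ (F := F) i j) a b = if i = a ∧ j = b then 1 else 0 := rfl

abbrev Idx (m : ℕ) : Type :=
  (I m × I m × Fin m) ⊕ ((I m × I m) ⊕ ((I m × I m) ⊕ (I m × I m)))

def U : Idx m → Matrix (I m) (I m) F
  | Sum.inl (i, j, z) => δ i j + δ (br j) (br (i.1 + j.1, z))
  | Sum.inr (Sum.inl (i, j)) => δ i j
  | Sum.inr (Sum.inr (Sum.inl (i, k))) =>
      ∑ z : Fin m, (δ i (i.1 + k.1, z) + δ (br (i.1 + k.1, z)) (br k))
  | Sum.inr (Sum.inr (Sum.inr (j, k))) => δ (br j) (br k)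

def V : Idx m → Matrix (I m) (I m) F
  | Sum.inl (i, j, z) => δ j (i.1 + j.1, z) + δ (br (i.1 + j.1, z)) (br i)
  | Sum.inr (Sum.inl (i, j)) =>
      ∑ z : Fin m, (δ j (i.1 + j.1, z) + δ (br (i.1 + j.1, z)) (br i))
  | Sum.inr (Sum.inr (Sum.inl (i, k))) => δ (br k) (br i)
  | Sum.inr (Sum.inr (Sum.inr (j, k))) => δ j k

def W : Idx m → Matrix (I m) (I m) F
  | Sum.inl (i, j, z) => δ i (i.1 + j.1, z) + δ (br j) (br i)
  | Sum.inr (Sum.inl (i, j)) => -δ (br j) (br i)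
  | Sum.inr (Sum.inr (Sum.inl (i, k))) => -δ i k
  | Sum.inr (Sum.inr (Sum.inr (j, k))) =>
      -∑ z : Fin m, (δ ((j.1 + k.1, z) : I m) k + δ (br j) (br (j.1 + k.1, z)))

set_option maxHeartbeats 1000000 in
theorem core (A B : Matrix (I m) (I m) F) (l q : I m) :
    (A * B) l q =
      ∑ s : Idx m, W s l q * (∑ i : I m, ∑ j : I m, U s i j * A i j)
        * (∑ g : I m, ∑ h : I m, V s g h * B g h) := by
  simp only [Fintype.sum_sum_type, Fintype.sum_prod_type, U, V, W,
    Matrix.add_apply, Matrix.neg_apply, Matrix.sum_apply, δ_apply,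
    add_mul, mul_add, neg_mul, mul_neg, ite_mul, mul_ite, one_mul, zero_mul,
    mul_one, mul_zero,
    Finset.sum_add_distrib, Finset.sum_neg_distrib, Finset.sum_ite_irrel,
    Finset.sum_ite_eq, Finset.sum_ite_eq', Finset.mem_univ, if_true,
    Finset.sum_const_zero, add_zero, zero_add, neg_zero,
    pair_eq, pair_eq', ite_and,
    br_eq, br_br, br_mk, br_fst, br_snd, zr1, zr2, zr3,
    z00, z01, z10, z11, ze01, ze10,
    zsumA, zsumB, zsumC, zsumC', Prod.mk.eta,
    Finset.mul_sum, Finset.sum_mul]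
  have hcomm : q.1 + l.1 = l.1 + q.1 := add_comm _ _
  have hz2 : ∀ a : ZMod 2, a + 1 + 1 = a := by decide
  have hz3 : ∀ a b : ZMod 2, a + b + b = a := by decide
  have hz4 : ∀ a b : ZMod 2, a + b + a = b := by decide
  rw [Matrix.mul_apply, Fintype.sum_prod_type, zsum_univ (l.1 + q.1)]
  simp only [br, hcomm, hz2, hz3, hz4, Prod.mk.eta]
  ring



lemma form_reindex {n' : ℕ} (e : Fin n' ≃ I m) (M : Matrix (I m) (I m) F)
    (A : Matrix (Fin n') (Fin n') F) :
    (∑ i : I m, ∑ j : I m, M i j * (A.submatrix ⇑e.symm ⇑e.symm) i j)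
      = ∑ i : Fin n', ∑ j : Fin n', (M.submatrix ⇑e ⇑e) i j * A i j := by
  refine (Fintype.sum_equiv e _ _ fun i => ?_).symm
  refine Fintype.sum_equiv e _ _ fun j => ?_
  simp [Matrix.submatrix_apply]

theorem exists_alg (mm : ℕ) :
    ∃ u v w, IsBilinearAlgorithm F (mm + mm) (mm + mm) (mm + mm)
      ((mm + mm) ^ 3 / 2 + 3 * (mm + mm) ^ 2) u v w := by
  have hcard1 : Fintype.card (Fin (mm + mm)) = Fintype.card (I mm) := by
    simp [ZMod.card]
    omega
  let e : Fin (mm + mm) ≃ I mm := Fintype.equivOfCardEq hcard1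
  have hcard2 : Fintype.card (Fin ((mm + mm) ^ 3 / 2 + 3 * (mm + mm) ^ 2))
      = Fintype.card (Idx mm) := by
    have cI : Fintype.card (I mm) = 2 * mm := by simp [ZMod.card]
    have key : (mm + mm) ^ 3 / 2 + 3 * (mm + mm) ^ 2 = 4 * mm ^ 3 + 12 * mm ^ 2 := by
      have e3 : (mm + mm) ^ 3 = 8 * mm ^ 3 := by ring
      have e2 : (mm + mm) ^ 2 = 4 * mm ^ 2 := by ring
      rw [e3, e2]
      generalize mm ^ 3 = a
      generalize mm ^ 2 = b
      omega
    simp only [Fintype.card_fin, Fintype.card_sum, Fintype.card_prod, cI, key]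
    ring
  let eI : Fin ((mm + mm) ^ 3 / 2 + 3 * (mm + mm) ^ 2) ≃ Idx mm :=
    Fintype.equivOfCardEq hcard2
  refine ⟨fun s => (U (eI s)).submatrix ⇑e ⇑e, fun s => (V (eI s)).submatrix ⇑e ⇑e,
    fun s => (W (eI s)).submatrix ⇑e ⇑e, ?_⟩
  intro A B l q
  have hAB : (A * B) l q
      = ((A.submatrix ⇑e.symm ⇑e.symm) * (B.submatrix ⇑e.symm ⇑e.symm)) (e l) (e q) := by
    rw [Matrix.submatrix_mul_equiv]
    simp
  rw [hAB, core, ← Equiv.sum_comp eI]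
  refine Finset.sum_congr rfl fun s _ => ?_
  rw [form_reindex e (U (eI s)) A, form_reindex e (V (eI s)) B]
  rfl

end MMEvenAux

/-- For every even positive n there is a bilinear algorithm of length
n³/2 + 3n² for MM(n,n,n) over any field; hence r_F(n,n,n) ≤ n³/2 + 3n². -/
theorem rank_le_of_even (F : Type*) [Field F] (n : ℕ) (hn : 0 < n) (he : Even n) :
    (∃ u v w, IsBilinearAlgorithm F n n n (n ^ 3 / 2 + 3 * n ^ 2) u v w) ∧
      bilinearRank F n n n ≤ n ^ 3 / 2 + 3 * n ^ 2 := by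
  obtain ⟨mm, rfl⟩ := he
  have hex := MMEvenAux.exists_alg (F := F) mm
  exact ⟨hex, Nat.sInf_le hex⟩
end

section
/- There exists a constant C > 0 such that for every positive integer K, the bilinear rank r_ℝ(K,K,K) of MM(K,K,K) over ℝ satisfies r_ℝ(K,K,K) ≤ C · K^p, where p = 3 · log(23120) / log(39304) (so p ≈ 2.8495 < 3). Here 23120 = 34³/2 + 3·34² and 39304 = 34³. -/
open Matrix BigOperators

/-- Pointwise (coefficient) characterization of bilinear algorithms. -/
lemma isBilinearAlgorithm_iff {F : Type*} [Field F] {m k n R : ℕ}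
    (u : Fin R → Matrix (Fin m) (Fin k) F)
    (v : Fin R → Matrix (Fin k) (Fin n) F)
    (w : Fin R → Matrix (Fin m) (Fin n) F) :
    IsBilinearAlgorithm F m k n R u v w ↔
      ∀ (i l : Fin m) (j g : Fin k) (h q : Fin n),
        ∑ s : Fin R, w s l q * u s i j * v s g h
          = if i = l ∧ j = g ∧ h = q then 1 else 0 := by
  constructor
  · intro H i l j g h q
    have key := H (Matrix.single i j 1) (Matrix.single g h 1) l q
    have h1 : ∀ s, (∑ i' : Fin m, ∑ j' : Fin k,
        u s i' j' * Matrix.single i j (1:F) i' j') = u s i j := by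
      intro s
      simp [Matrix.single, ite_and, Finset.sum_ite_eq]
    have h2 : ∀ s, (∑ g' : Fin k, ∑ h' : Fin n,
        v s g' h' * Matrix.single g h (1:F) g' h') = v s g h := by
      intro s
      simp [Matrix.single, ite_and, Finset.sum_ite_eq]
    have h3 : (Matrix.single i j (1:F) * Matrix.single g h (1:F)) l q
        = if i = l ∧ j = g ∧ h = q then 1 else 0 := by
      simp [Matrix.mul_apply, Matrix.single, ite_and, Finset.sum_ite_eq]
      by_cases h4 : i = l <;> by_cases h5 : j = g <;> by_cases h6 : h = q <;>
        simp [h4, h5, h6]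
    simp only [h1, h2] at key
    rw [h3] at key
    rw [← key]
  · intro H A B l q
    rw [Matrix.mul_apply]
    have step : ∀ s : Fin R,
        w s l q * (∑ i : Fin m, ∑ j : Fin k, u s i j * A i j)
          * (∑ g : Fin k, ∑ h : Fin n, v s g h * B g h)
        = ∑ p : Fin m × Fin k, ∑ r : Fin k × Fin n,
            (w s l q * u s p.1 p.2 * v s r.1 r.2) * (A p.1 p.2 * B r.1 r.2) := by
      intro s
      have e1 : (∑ p : Fin m × Fin k, u s p.1 p.2 * A p.1 p.2)
          = ∑ i : Fin m, ∑ j : Fin k, u s i j * A i j := Fintype.sum_prod_type _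
      have e2 : (∑ r : Fin k × Fin n, v s r.1 r.2 * B r.1 r.2)
          = ∑ g : Fin k, ∑ h : Fin n, v s g h * B g h := Fintype.sum_prod_type _
      rw [← e1, ← e2]
      simp only [Finset.mul_sum, Finset.sum_mul]
      rw [Finset.sum_comm]
      exact Finset.sum_congr rfl fun p _ => Finset.sum_congr rfl fun r _ => by ring
    simp only [step]
    rw [Finset.sum_comm]
    have step2 : ∀ p : Fin m × Fin k,
        (∑ s : Fin R, ∑ r : Fin k × Fin n,
          (w s l q * u s p.1 p.2 * v s r.1 r.2) * (A p.1 p.2 * B r.1 r.2))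
        = ∑ r : Fin k × Fin n,
            (if p.1 = l ∧ p.2 = r.1 ∧ r.2 = q then 1 else 0)
              * (A p.1 p.2 * B r.1 r.2) := by
      intro p
      rw [Finset.sum_comm]
      refine Finset.sum_congr rfl fun r _ => ?_
      rw [← Finset.sum_mul, H]
    simp only [step2]
    rw [Fintype.sum_prod_type]
    simp [Fintype.sum_prod_type, ite_and, Finset.sum_ite_eq, Finset.sum_ite_eq']

/-- Tensor (Kronecker) product of two bilinear algorithms. -/
lemma bilinear_kron {F : Type*} [Field F] {m k n R m' k' n' R' : ℕ}
    {u : Fin R → Matrix (Fin m) (Fin k) F}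
    {v : Fin R → Matrix (Fin k) (Fin n) F}
    {w : Fin R → Matrix (Fin m) (Fin n) F}
    {u' : Fin R' → Matrix (Fin m') (Fin k') F}
    {v' : Fin R' → Matrix (Fin k') (Fin n') F}
    {w' : Fin R' → Matrix (Fin m') (Fin n') F}
    (H : IsBilinearAlgorithm F m k n R u v w)
    (H' : IsBilinearAlgorithm F m' k' n' R' u' v' w') :
    ∃ U V W, IsBilinearAlgorithm F (m * m') (k * k') (n * n') (R * R') U V W := by
  refine ⟨fun t I J => u (finProdFinEquiv.symm t).1 (finProdFinEquiv.symm I).1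
      (finProdFinEquiv.symm J).1 *
    u' (finProdFinEquiv.symm t).2 (finProdFinEquiv.symm I).2 (finProdFinEquiv.symm J).2,
    fun t J G => v (finProdFinEquiv.symm t).1 (finProdFinEquiv.symm J).1
      (finProdFinEquiv.symm G).1 *
    v' (finProdFinEquiv.symm t).2 (finProdFinEquiv.symm J).2 (finProdFinEquiv.symm G).2,
    fun t I G => w (finProdFinEquiv.symm t).1 (finProdFinEquiv.symm I).1
      (finProdFinEquiv.symm G).1 *
    w' (finProdFinEquiv.symm t).2 (finProdFinEquiv.symm I).2 (finProdFinEquiv.symm G).2, ?_⟩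
  rw [isBilinearAlgorithm_iff] at H H'
  apply (isBilinearAlgorithm_iff _ _ _).2
  intro I L J G Hh Q
  obtain ⟨⟨i, i'⟩, rfl⟩ := finProdFinEquiv.surjective I
  obtain ⟨⟨l, l'⟩, rfl⟩ := finProdFinEquiv.surjective L
  obtain ⟨⟨j, j'⟩, rfl⟩ := finProdFinEquiv.surjective J
  obtain ⟨⟨g, g'⟩, rfl⟩ := finProdFinEquiv.surjective G
  obtain ⟨⟨h, h'⟩, rfl⟩ := finProdFinEquiv.surjective Hh
  obtain ⟨⟨q, q'⟩, rfl⟩ := finProdFinEquiv.surjective Q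
  rw [← Equiv.sum_comp (finProdFinEquiv : Fin R × Fin R' ≃ Fin (R * R'))]
  simp only [Equiv.symm_apply_apply]
  rw [Fintype.sum_prod_type]
  have factor : (∑ s : Fin R, ∑ s' : Fin R',
      (w s l q * w' s' l' q') * (u s i j * u' s' i' j') * (v s g h * v' s' g' h'))
      = (∑ s : Fin R, w s l q * u s i j * v s g h)
        * (∑ s' : Fin R', w' s' l' q' * u' s' i' j' * v' s' g' h') := by
    rw [Finset.sum_mul_sum]
    exact Finset.sum_congr rfl fun s _ => Finset.sum_congr rfl fun s' _ => by ring
  rw [factor, H, H']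
  have hiff : (finProdFinEquiv (i, i') = finProdFinEquiv (l, l')
      ∧ finProdFinEquiv (j, j') = finProdFinEquiv (g, g')
      ∧ finProdFinEquiv (h, h') = finProdFinEquiv (q, q'))
      ↔ ((i = l ∧ j = g ∧ h = q) ∧ (i' = l' ∧ j' = g' ∧ h' = q')) := by
    simp only [Equiv.apply_eq_iff_eq, Prod.mk.injEq]
    tauto
  rw [ite_zero_mul_ite_zero, one_mul]
  simp only [hiff]

/-- Restriction (zero-padding) of a bilinear algorithm to smaller formats. -/
lemma bilinear_pad {F : Type*} [Field F] {m k n R m' k' n' : ℕ}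
    (hm : m ≤ m') (hk : k ≤ k') (hn : n ≤ n')
    (H : ∃ u v w, IsBilinearAlgorithm F m' k' n' R u v w) :
    ∃ u v w, IsBilinearAlgorithm F m k n R u v w := by
  obtain ⟨u, v, w, H⟩ := H
  refine ⟨fun s i j => u s (i.castLE hm) (j.castLE hk),
    fun s j g => v s (j.castLE hk) (g.castLE hn),
    fun s i g => w s (i.castLE hm) (g.castLE hn), ?_⟩
  rw [isBilinearAlgorithm_iff] at H
  apply (isBilinearAlgorithm_iff _ _ _).2
  intro i l j g h q
  rw [H]
  simp [Fin.castLE_inj]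

def strassenU : Fin 7 → Matrix (Fin 2) (Fin 2) ℝ :=
  ![!![1,0;0,1], !![0,0;1,1], !![1,0;0,0], !![0,0;0,1], !![1,1;0,0],
    !![-1,0;1,0], !![0,1;0,-1]]

def strassenV : Fin 7 → Matrix (Fin 2) (Fin 2) ℝ :=
  ![!![1,0;0,1], !![1,0;0,0], !![0,1;0,-1], !![-1,0;1,0], !![0,0;0,1],
    !![1,1;0,0], !![0,0;1,1]]

def strassenW : Fin 7 → Matrix (Fin 2) (Fin 2) ℝ :=
  ![!![1,0;0,1], !![0,0;1,-1], !![0,1;0,1], !![1,0;1,0], !![-1,1;0,0],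
    !![0,0;0,1], !![1,0;0,0]]

set_option maxHeartbeats 1000000 in
/-- Strassen's algorithm: `r_ℝ(2,2,2) ≤ 7`. -/
lemma strassen : IsBilinearAlgorithm ℝ 2 2 2 7 strassenU strassenV strassenW := by
  rw [isBilinearAlgorithm_iff]
  simp only [Fin.forall_fin_two]
  norm_num [strassenU, strassenV, strassenW, Fin.sum_univ_succ]

lemma one_alg : IsBilinearAlgorithm ℝ 1 1 1 1
    (fun _ => !![1]) (fun _ => !![1]) (fun _ => !![1]) := by
  intro A B l q
  have hl : l = 0 := Subsingleton.elim _ _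
  have hq : q = 0 := Subsingleton.elim _ _
  subst hl; subst hq
  rw [Matrix.mul_apply]
  simp [Fin.sum_univ_succ]

lemma pow_alg : ∀ t : ℕ, ∃ u v w, IsBilinearAlgorithm ℝ (2^t) (2^t) (2^t) (7^t) u v w := by
  intro t
  induction t with
  | zero => exact ⟨_, _, _, one_alg⟩
  | succ t ih =>
    obtain ⟨u, v, w, H⟩ := ih
    rw [pow_succ 7 t, pow_succ 2 t]
    exact bilinear_kron H strassen

lemma bilinearRank_le_of_alg {F : Type*} [Field F] {m k n R : ℕ}
    (H : ∃ u v w, IsBilinearAlgorithm F m k n R u v w) :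
    bilinearRank F m k n ≤ R :=
  Nat.sInf_le H

lemma rank_nat_bound {K : ℕ} (hK : 0 < K) :
    bilinearRank ℝ K K K ≤ 7 ^ Nat.clog 2 K := by
  have hle : K ≤ 2 ^ Nat.clog 2 K := Nat.le_pow_clog one_lt_two K
  exact bilinearRank_le_of_alg (bilinear_pad hle hle hle (pow_alg _))

lemma two_pow_clog_le {K : ℕ} (hK : 0 < K) : 2 ^ Nat.clog 2 K ≤ 2 * K := by
  rcases eq_or_lt_of_le (show 1 ≤ K from hK) with h1 | h1
  · simp [← h1]
  · have ht : 0 < Nat.clog 2 K := Nat.clog_pos one_lt_two h1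
    have h2 : 2 ^ (Nat.clog 2 K - 1) < K := Nat.pow_pred_clog_lt_self one_lt_two h1
    calc 2 ^ Nat.clog 2 K = 2 * 2 ^ (Nat.clog 2 K - 1) := by
          rw [← pow_succ']
          congr 1
          omega
      _ ≤ 2 * K := by omega

lemma exponent_le :
    Real.log 7 / Real.log 2 ≤ 3 * Real.log 23120 / Real.log 39304 := by
  have l2 : (0:ℝ) < Real.log 2 := Real.log_pos (by norm_num)
  have l7 : (0:ℝ) < Real.log 7 := Real.log_pos (by norm_num)
  have l34 : (0:ℝ) < Real.log 34 := Real.log_pos (by norm_num)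
  have l23120 : (0:ℝ) < Real.log 23120 := Real.log_pos (by norm_num)
  have h39 : Real.log 39304 = 3 * Real.log 34 := by
    rw [show (39304:ℝ) = 34^(3:ℕ) by norm_num, Real.log_pow]
    push_cast; ring
  rw [h39, div_le_div_iff₀ l2 (by positivity)]
  have h1 : 6 * Real.log 7 ≤ 17 * Real.log 2 := by
    have h := Real.log_le_log (by positivity) (show (7:ℝ)^(6:ℕ) ≤ 2^(17:ℕ) by norm_num)
    rw [Real.log_pow, Real.log_pow] at h
    push_cast at h
    linarith
  have h2 : 17 * Real.log 34 ≤ 6 * Real.log 23120 := by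
    have h := Real.log_le_log (by positivity)
      (show (34:ℝ)^(17:ℕ) ≤ 23120^(6:ℕ) by norm_num)
    rw [Real.log_pow, Real.log_pow] at h
    push_cast at h
    linarith
  nlinarith [mul_le_mul h1 h2 (by positivity) (by positivity)]

/-- There is a constant C > 0 with r_ℝ(K,K,K) ≤ C·K^p for all K ≥ 1, where
p = 3·log(23120)/log(39304) ≈ 2.8495 (note 23120 = 34³/2 + 3·34², 39304 = 34³). -/
theorem rank_K_le_pow :
    ∃ C : ℝ, 0 < C ∧ ∀ K : ℕ, 0 < K →
      (bilinearRank ℝ K K K : ℝ)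
        ≤ C * (K : ℝ) ^ (3 * Real.log 23120 / Real.log 39304) := by
  refine ⟨7, by norm_num, ?_⟩
  intro K hK
  set α := Real.log 7 / Real.log 2 with hα
  have l2 : (0:ℝ) < Real.log 2 := Real.log_pos (by norm_num)
  have l7 : (0:ℝ) < Real.log 7 := Real.log_pos (by norm_num)
  have hα0 : 0 ≤ α := by positivity
  have hKR : (1:ℝ) ≤ (K:ℝ) := by exact_mod_cast hK
  set t := Nat.clog 2 K with ht
  have hrank := rank_nat_bound hK
  have hpow : ((2:ℝ))^t ≤ 2 * (K:ℝ) := by exact_mod_cast two_pow_clog_le hK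
  have h2α : (2:ℝ) ^ α = 7 := by
    rw [Real.rpow_def_of_pos (by norm_num : (0:ℝ) < 2)]
    have : Real.log 2 * α = Real.log 7 := by
      rw [hα]; field_simp
    rw [this]
    exact Real.exp_log (by norm_num)
  have h7t : ((7:ℝ))^t = ((2:ℝ)^t) ^ α := by
    rw [← h2α, ← Real.rpow_natCast ((2:ℝ)^α) t, ← Real.rpow_natCast (2:ℝ) t,
      ← Real.rpow_mul (by norm_num : (0:ℝ) ≤ 2),
      ← Real.rpow_mul (by norm_num : (0:ℝ) ≤ 2), mul_comm]
  have key : ((7:ℝ))^t ≤ 7 * (K:ℝ) ^ α := by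
    rw [h7t]
    calc ((2:ℝ)^t)^α ≤ (2*(K:ℝ))^α :=
          Real.rpow_le_rpow (by positivity) hpow hα0
      _ = (2:ℝ)^α * (K:ℝ)^α := Real.mul_rpow (by norm_num) (by positivity)
      _ = 7 * (K:ℝ)^α := by rw [h2α]
  calc (bilinearRank ℝ K K K : ℝ) ≤ ((7^t : ℕ) : ℝ) := by exact_mod_cast hrank
    _ = (7:ℝ)^t := by push_cast; ring
    _ ≤ 7 * (K:ℝ)^α := key
    _ ≤ 7 * (K:ℝ)^(3*Real.log 23120/Real.log 39304) :=
        mul_le_mul_of_nonneg_left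
          (Real.rpow_le_rpow_of_exponent_le hKR exponent_le) (by norm_num)
end

section
/- For all positive integers m, k, n and every field F, every bilinear algorithm for MM(m,k,n) over F has length at least (m + n − 1)·k; that is, the bilinear rank satisfies r_F(m,k,n) ≥ (m + n − 1)·k. -/
open Matrix BigOperators

namespace RankLB

variable {F : Type*} [Field F] {m k n R : ℕ}

/-- The linear functional `B ↦ ∑ v g h * B g h`. -/
def vf (v : Matrix (Fin k) (Fin n) F) : Matrix (Fin k) (Fin n) F →ₗ[F] F where
  toFun B := ∑ g, ∑ h, v g h * B g h
  map_add' B C := by simp [Matrix.add_apply, mul_add, Finset.sum_add_distrib]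
  map_smul' a B := by
    simp [Matrix.smul_apply, smul_eq_mul, Finset.mul_sum, mul_left_comm]

/-- Coordinate functional on matrices. -/
def ef (x : Fin k × Fin n) : Matrix (Fin k) (Fin n) F →ₗ[F] F where
  toFun B := B x.1 x.2
  map_add' B C := rfl
  map_smul' a B := rfl

lemma sum_std {p r : ℕ} (a : Fin p) (b : Fin r) (A : Matrix (Fin p) (Fin r) F) :
    (∑ i, ∑ j, Matrix.single a b (1 : F) i j * A i j) = A a b := by
  simp [Matrix.single, ite_and, Finset.sum_ite_eq]

/-- The substitution invariant: for every set `E` of positions of `B`,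
there are `|E|` products and a linear substitution `L` fixing coordinates
outside `E`, killing the `v`-functionals of the chosen products. -/
lemma invariant (hm : 0 < m)
    (u : Fin R → Matrix (Fin m) (Fin k) F) (v : Fin R → Matrix (Fin k) (Fin n) F)
    (w : Fin R → Matrix (Fin m) (Fin n) F)
    (halg : IsBilinearAlgorithm F m k n R u v w)
    (E : Finset (Fin k × Fin n)) :
    ∃ S : Finset (Fin R), S.card = E.card ∧
      ∃ L : Matrix (Fin k) (Fin n) F →ₗ[F] Matrix (Fin k) (Fin n) F,
        (∀ B : Matrix (Fin k) (Fin n) F, ∀ x : Fin k × Fin n,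
            x ∉ E → L B x.1 x.2 = B x.1 x.2) ∧
        (∀ s ∈ S, ∀ B, vf (v s) (L B) = 0) := by
  classical
  induction E using Finset.induction_on with
  | empty =>
      exact ⟨∅, by simp, LinearMap.id, fun B x _ => rfl, by simp⟩
  | @insert x E hx ih =>
      obtain ⟨S, hcard, L, ha, hc⟩ := ih
      set e : Matrix (Fin k) (Fin n) F := Matrix.single x.1 x.2 1 with he
      have he1 : (L e) x.1 x.2 = 1 := by
        rw [ha e x hx]; simp [he, Matrix.single]
      have hex : ∃ s₀, s₀ ∉ S ∧ vf (v s₀) (L e) ≠ 0 := by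
        by_contra hcon
        push_neg at hcon
        have hall : ∀ s, vf (v s) (L e) = 0 := by
          intro s
          by_cases hs : s ∈ S
          · exact hc s hs e
          · exact hcon s hs
        have l0 : Fin m := ⟨0, hm⟩
        have hid := halg (Matrix.single l0 x.1 1) (L e) l0 x.2
        have hLHS : (Matrix.single l0 x.1 (1 : F) * L e) l0 x.2 = (L e) x.1 x.2 := by
          rw [Matrix.mul_apply]
          simp [Matrix.single, ite_and, Finset.sum_ite_eq]
        rw [hLHS] at hid
        have hz : ∀ s : Fin R, (∑ g, ∑ h, v s g h * (L e) g h) = 0 := hall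
        simp only [hz, mul_zero] at hid
        rw [he1] at hid
        simp at hid
      obtain ⟨s₀, hs₀, hc0⟩ := hex
      set c : F := vf (v s₀) (L e) with hcdef
      set g : Matrix (Fin k) (Fin n) F →ₗ[F] Matrix (Fin k) (Fin n) F :=
        LinearMap.id - (ef x).smulRight e with hg
      set μ : Matrix (Fin k) (Fin n) F →ₗ[F] F := (vf (v s₀)).comp (L.comp g) with hμ
      set T : Matrix (Fin k) (Fin n) F →ₗ[F] Matrix (Fin k) (Fin n) F :=
        g - (c⁻¹ • μ).smulRight e with hT
      refine ⟨insert s₀ S, ?_, L.comp T, ?_, ?_⟩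
      · rw [Finset.card_insert_of_notMem hs₀, Finset.card_insert_of_notMem hx, hcard]
      · intro B x' hx'
        have hx'E : x' ∉ E := fun h => hx' (Finset.mem_insert_of_mem h)
        have hx'x : x' ≠ x := fun h => hx' (h ▸ Finset.mem_insert_self x E)
        have he0 : e x'.1 x'.2 = 0 := by
          have : ¬(x.1 = x'.1 ∧ x.2 = x'.2) := by
            intro ⟨h1, h2⟩
            exact hx'x (Prod.ext h1.symm h2.symm)
          simp [he, Matrix.single, this]
        show L (T B) x'.1 x'.2 = B x'.1 x'.2
        rw [ha (T B) x' hx'E]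
        simp [hT, hg, Matrix.sub_apply, Matrix.smul_apply, he0]
      · intro s hs B
        by_cases hss : s ∈ S
        · exact hc s hss (T B)
        · have hseq : s = s₀ := by
            rcases Finset.mem_insert.mp hs with h | h
            · exact h
            · exact absurd h hss
          have hTB : L (T B) = L (g B) - (c⁻¹ * μ B) • L e := by
            have hTB0 : T B = g B - (c⁻¹ * μ B) • e := by
              simp [hT, LinearMap.sub_apply, LinearMap.smulRight_apply,
                LinearMap.smul_apply, smul_eq_mul]
            rw [hTB0, map_sub, _root_.map_smul]
          show vf (v s) (L (T B)) = 0
          rw [hseq, hTB, map_sub, _root_.map_smul, smul_eq_mul]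
          have h2 : vf (v s₀) (L (g B)) = μ B := rfl
          rw [h2, show vf (v s₀) (L e) = c from rfl]
          rw [mul_comm c⁻¹ (μ B), mul_assoc, inv_mul_cancel₀ hc0, mul_one, sub_self]

lemma key (hm : 0 < m) (hn : 0 < n)
    (u : Fin R → Matrix (Fin m) (Fin k) F) (v : Fin R → Matrix (Fin k) (Fin n) F)
    (w : Fin R → Matrix (Fin m) (Fin n) F)
    (halg : IsBilinearAlgorithm F m k n R u v w) :
    (m + n - 1) * k ≤ R := by
  classical
  haveI : NeZero n := ⟨hn.ne'⟩
  set X : Finset (Fin k × Fin n) := Finset.univ ×ˢ ({(0 : Fin n)}ᶜ) with hX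
  have hXcard : X.card = k * (n - 1) := by
    rw [hX, Finset.card_product, Finset.card_univ, Finset.card_compl,
      Finset.card_singleton, Fintype.card_fin, Fintype.card_fin]
  obtain ⟨S, hS, L, ha, hc⟩ := invariant hm u v w halg X
  -- the u-functionals indexed by Sᶜ separate points of Matrix m k
  have key2 : ∀ A : Matrix (Fin m) (Fin k) F,
      (∀ s ∈ Sᶜ, (∑ i, ∑ j, u s i j * A i j) = 0) → A = 0 := by
    intro A hA
    ext l j0
    have h1 := halg A (L (Matrix.single j0 (0 : Fin n) 1)) l 0
    set B0 : Matrix (Fin k) (Fin n) F := Matrix.single j0 (0 : Fin n) 1 with hB0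
    have hRHS : (∑ s : Fin R, w s l 0 * (∑ i, ∑ j, u s i j * A i j)
        * (∑ g, ∑ h, v s g h * (L B0) g h)) = 0 := by
      apply Finset.sum_eq_zero
      intro s _
      by_cases hs : s ∈ S
      · have := hc s hs B0
        have hv : (∑ g, ∑ h, v s g h * (L B0) g h) = 0 := this
        rw [hv, mul_zero]
      · have hu : (∑ i, ∑ j, u s i j * A i j) = 0 := hA s (Finset.mem_compl.mpr hs)
        rw [hu, mul_zero, zero_mul]
    rw [hRHS] at h1
    have hLHS : (A * L B0) l 0 = A l j0 := by
      rw [Matrix.mul_apply]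
      have hcoord : ∀ j : Fin k, (L B0) j 0 = B0 j 0 := by
        intro j
        have : ((j, (0 : Fin n)) : Fin k × Fin n) ∉ X := by
          simp [hX]
        exact ha B0 (j, 0) this
      simp only [hcoord]
      simp only [hB0]
      simp [Matrix.single, ite_and, Finset.sum_ite_eq]
    rw [hLHS] at h1
    simpa using h1
  -- the linear map A ↦ (u-functional values on Sᶜ) is injective
  set Φ : Matrix (Fin m) (Fin k) F →ₗ[F] ((Sᶜ : Finset (Fin R)) → F) :=
    { toFun := fun A s => ∑ i, ∑ j, u s.1 i j * A i j
      map_add' := fun A B => by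
        funext s
        simp [Matrix.add_apply, mul_add, Finset.sum_add_distrib]
      map_smul' := fun a A => by
        funext s
        simp [Matrix.smul_apply, smul_eq_mul, Finset.mul_sum, mul_left_comm] } with hΦ
  have hinj : Function.Injective Φ := by
    intro A1 A2 hAB
    have h0 : Φ (A1 - A2) = 0 := by rw [map_sub, hAB, sub_self]
    have : A1 - A2 = 0 := by
      apply key2
      intro s hsc
      have := congrFun h0 ⟨s, hsc⟩
      simpa [hΦ, Matrix.sub_apply, mul_sub, Finset.sum_sub_distrib] using this
    exact sub_eq_zero.mp this
  have hdim : m * k ≤ (Sᶜ : Finset (Fin R)).card := by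
    have h1 := LinearMap.finrank_le_finrank_of_injective hinj
    rw [Module.finrank_matrix, Module.finrank_fintype_fun_eq_card,
      Fintype.card_coe, Fintype.card_fin, Fintype.card_fin,
      Module.finrank_self, mul_one] at h1
    exact h1
  have hsum : S.card + (Sᶜ : Finset (Fin R)).card = R := by
    rw [Finset.card_add_card_compl, Fintype.card_fin]
  have hfin : (m + n - 1) * k = m * k + k * (n - 1) := by
    have h : m + n - 1 = m + (n - 1) := by omega
    rw [h, add_mul, mul_comm k (n-1)]
  omega

lemma exists_alg : ∃ R u v w, IsBilinearAlgorithm F m k n R u v w := by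
  classical
  set e : (Fin m × Fin k) × Fin n ≃ Fin (m * k * n) :=
    (Equiv.prodCongr finProdFinEquiv (Equiv.refl (Fin n))).trans finProdFinEquiv with he
  refine ⟨m * k * n,
    fun s => Matrix.single (e.symm s).1.1 (e.symm s).1.2 1,
    fun s => Matrix.single (e.symm s).1.2 (e.symm s).2 1,
    fun s => Matrix.single (e.symm s).1.1 (e.symm s).2 1, ?_⟩
  intro A B l q
  rw [← Equiv.sum_comp e (fun s => Matrix.single (e.symm s).1.1 (e.symm s).2 (1:F) l q
      * (∑ i, ∑ j, Matrix.single (e.symm s).1.1 (e.symm s).1.2 1 i j * A i j)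
      * (∑ g, ∑ h, Matrix.single (e.symm s).1.2 (e.symm s).2 1 g h * B g h))]
  simp only [Equiv.symm_apply_apply]
  rw [Fintype.sum_prod_type, Fintype.sum_prod_type]
  simp only [sum_std]
  rw [Matrix.mul_apply]
  simp [Matrix.single, ite_and, Finset.sum_ite_eq, mul_comm]

end RankLB

/-- Every bilinear algorithm for MM(m,k,n) has length at least (m+n-1)·k;
that is, r_F(m,k,n) ≥ (m+n-1)·k. -/
theorem rank_lower_bound (F : Type*) [Field F] (m k n : ℕ)
    (hm : 0 < m) (hk : 0 < k) (hn : 0 < n) :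
    (∀ (R : ℕ) (u : Fin R → Matrix (Fin m) (Fin k) F)
        (v : Fin R → Matrix (Fin k) (Fin n) F)
        (w : Fin R → Matrix (Fin m) (Fin n) F),
        IsBilinearAlgorithm F m k n R u v w → (m + n - 1) * k ≤ R) ∧
      (m + n - 1) * k ≤ bilinearRank F m k n := by
  constructor
  · intro R u v w halg
    exact RankLB.key hm hn u v w halg
  · obtain ⟨R₀, u₀, v₀, w₀, h₀⟩ := RankLB.exists_alg (F := F) (m := m) (k := k) (n := n)
    have hmem : R₀ ∈ {R : ℕ | ∃ u v w, IsBilinearAlgorithm F m k n R u v w} :=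
      ⟨u₀, v₀, w₀, h₀⟩
    apply le_csInf ⟨R₀, hmem⟩
    rintro R ⟨u, v, w, halg⟩
    exact RankLB.key hm hn u v w halg
end

section
/- For every even positive integer n = 2m and every field F, the following trilinear identity holds for all n×n matrices A = (a_{ij}), B = (b_{jh}), D = (d_{hi}) over F (with the wrap-around convention f_{l n} = f_{l 0} and f_{n l} = f_{0 l} for f ∈ {a, b, d} and 0 ≤ l ≤ n): Σ_{i,j,h=0,…,n−1; i+j+h even} (a_{ij} + a_{h+1,i+1})(b_{jh} + b_{i+1,j+1})(d_{hi} + d_{j+1,h+1}) − Σ_{i,h=0}^{n−1} a_{h+1,i+1} (Σ_{j: 0≤j≤n−1, i+j+h even} (b_{jh} + b_{i+1,j+1})) d_{hi} − Σ_{i,j=0}^{n−1} a_{ij} b_{i+1,j+1} (Σ_{h: 0≤h≤n−1, i+j+h even} (d_{hi} + d_{j+1,h+1})) − Σ_{h,j=0}^{n−1} (Σ_{i: 0≤i≤n−1, i+j+h even} (a_{ij} + a_{h+1,i+1})) b_{jh} d_{j+1,h+1} = Σ_{i,j,h=0}^{n−1} a_{ij} b_{jh} d_{hi}. -/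
open Matrix BigOperators


lemma val_succ_mod_two {n : ℕ} [NeZero n] (he : Even n) (x : ZMod n) :
    (x + 1).val % 2 = (x.val + 1) % 2 := by
  obtain ⟨k, hk⟩ := he
  have hn : 0 < n := Nat.pos_of_ne_zero (NeZero.ne n)
  have h1 : 1 < n := by omega
  have : (x + 1).val = (x.val + 1) % n := by
    rw [ZMod.val_add, ZMod.val_one_eq_one_mod, Nat.mod_eq_of_lt h1]
  rw [this, Nat.mod_mod_of_dvd _ ⟨k, by omega⟩]

lemma parity3 {n : ℕ} [NeZero n] (he : Even n) (i j h : ZMod n) :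
    Even ((h + 1).val + (i + 1).val + (j + 1).val) ↔
      ¬ Even (i.val + j.val + h.val) := by
  have hi := val_succ_mod_two he i
  have hj := val_succ_mod_two he j
  have hh := val_succ_mod_two he h
  simp only [Nat.even_iff]
  omega

lemma shift_sum {n : ℕ} [NeZero n] {M : Type*} [AddCommMonoid M] (f : ZMod n → M) :
    ∑ x : ZMod n, f (x + 1) = ∑ x : ZMod n, f x :=
  Fintype.sum_equiv (Equiv.addRight 1) _ _ (fun _ => rfl)

lemma sum_rot {α M : Type*} [Fintype α] [AddCommMonoid M] (g : α → α → α → M) :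
    ∑ x : α, ∑ y : α, ∑ z : α, g z x y = ∑ x : α, ∑ y : α, ∑ z : α, g x y z :=
  calc ∑ x : α, ∑ y : α, ∑ z : α, g z x y
      = ∑ x : α, ∑ z : α, ∑ y : α, g z x y :=
        Finset.sum_congr rfl fun _ _ => Finset.sum_comm
    _ = ∑ z : α, ∑ x : α, ∑ y : α, g z x y := Finset.sum_comm

lemma sum_rev {α M : Type*} [Fintype α] [AddCommMonoid M] (g : α → α → α → M) :
    ∑ z : α, ∑ y : α, ∑ x : α, g x y z = ∑ x : α, ∑ y : α, ∑ z : α, g x y z :=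
  calc ∑ z : α, ∑ y : α, ∑ x : α, g x y z
      = ∑ z : α, ∑ x : α, ∑ y : α, g x y z :=
        Finset.sum_congr rfl fun _ _ => Finset.sum_comm
    _ = ∑ x : α, ∑ z : α, ∑ y : α, g x y z := Finset.sum_comm
    _ = ∑ x : α, ∑ y : α, ∑ z : α, g x y z :=
        Finset.sum_congr rfl fun _ _ => Finset.sum_comm



/-- The trilinear aggregation identity: for even positive n, the displayed
combination of trilinear terms equals trace(A·B·D) = Σ a_{ij} b_{jh} d_{hi};
indices are taken modulo n, which realizes the wrap-around convention
f_{l n} = f_{l 0}, f_{n l} = f_{0 l}. -/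
theorem trilinear_aggregation (F : Type*) [Field F] (n : ℕ) [NeZero n]
    (he : Even n) (a b d : ZMod n → ZMod n → F) :
    (∑ i : ZMod n, ∑ j : ZMod n, ∑ h : ZMod n,
        if Even (i.val + j.val + h.val) then
          (a i j + a (h + 1) (i + 1)) * (b j h + b (i + 1) (j + 1)) *
            (d h i + d (j + 1) (h + 1))
        else 0)
      - (∑ i : ZMod n, ∑ h : ZMod n,
          a (h + 1) (i + 1) *
            (∑ j : ZMod n,
              if Even (i.val + j.val + h.val) then b j h + b (i + 1) (j + 1) else 0) *
            d h i)
      - (∑ i : ZMod n, ∑ j : ZMod n,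
          a i j * b (i + 1) (j + 1) *
            (∑ h : ZMod n,
              if Even (i.val + j.val + h.val) then d h i + d (j + 1) (h + 1) else 0))
      - (∑ h : ZMod n, ∑ j : ZMod n,
          (∑ i : ZMod n,
              if Even (i.val + j.val + h.val) then a i j + a (h + 1) (i + 1) else 0) *
            b j h * d (j + 1) (h + 1))
    = ∑ i : ZMod n, ∑ j : ZMod n, ∑ h : ZMod n, a i j * b j h * d h i := by
  classical
  have h2 : (∑ i : ZMod n, ∑ h : ZMod n,
          a (h + 1) (i + 1) *
            (∑ j : ZMod n,
              if Even (i.val + j.val + h.val) then b j h + b (i + 1) (j + 1) else 0) *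
            d h i)
      = ∑ i : ZMod n, ∑ j : ZMod n, ∑ h : ZMod n,
          if Even (i.val + j.val + h.val) then
            a (h + 1) (i + 1) * (b j h + b (i + 1) (j + 1)) * d h i else 0 := by
    refine Finset.sum_congr rfl fun i _ => ?_
    rw [Finset.sum_comm]
    refine Finset.sum_congr rfl fun h _ => ?_
    rw [Finset.mul_sum, Finset.sum_mul]
    refine Finset.sum_congr rfl fun j _ => ?_
    split <;> simp
  have h3 : (∑ i : ZMod n, ∑ j : ZMod n,
          a i j * b (i + 1) (j + 1) *
            (∑ h : ZMod n,
              if Even (i.val + j.val + h.val) then d h i + d (j + 1) (h + 1) else 0))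
      = ∑ i : ZMod n, ∑ j : ZMod n, ∑ h : ZMod n,
          if Even (i.val + j.val + h.val) then
            a i j * b (i + 1) (j + 1) * (d h i + d (j + 1) (h + 1)) else 0 := by
    refine Finset.sum_congr rfl fun i _ => Finset.sum_congr rfl fun j _ => ?_
    rw [Finset.mul_sum]
    refine Finset.sum_congr rfl fun h _ => ?_
    split <;> simp
  have h4 : (∑ h : ZMod n, ∑ j : ZMod n,
          (∑ i : ZMod n,
              if Even (i.val + j.val + h.val) then a i j + a (h + 1) (i + 1) else 0) *
            b j h * d (j + 1) (h + 1))
      = ∑ i : ZMod n, ∑ j : ZMod n, ∑ h : ZMod n,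
          if Even (i.val + j.val + h.val) then
            (a i j + a (h + 1) (i + 1)) * b j h * d (j + 1) (h + 1) else 0 := by
    rw [← sum_rev (fun i j h => if Even (i.val + j.val + h.val) then
            (a i j + a (h + 1) (i + 1)) * b j h * d (j + 1) (h + 1) else 0)]
    refine Finset.sum_congr rfl fun h _ => Finset.sum_congr rfl fun j _ => ?_
    rw [Finset.sum_mul, Finset.sum_mul]
    refine Finset.sum_congr rfl fun i _ => ?_
    split <;> simp
  rw [h2, h3, h4]
  simp only [← Finset.sum_sub_distrib]
  have key : ∀ i j h : ZMod n,
      (if Even (i.val + j.val + h.val) then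
          (a i j + a (h + 1) (i + 1)) * (b j h + b (i + 1) (j + 1)) *
            (d h i + d (j + 1) (h + 1))
        else 0)
      - (if Even (i.val + j.val + h.val) then
          a (h + 1) (i + 1) * (b j h + b (i + 1) (j + 1)) * d h i else 0)
      - (if Even (i.val + j.val + h.val) then
          a i j * b (i + 1) (j + 1) * (d h i + d (j + 1) (h + 1)) else 0)
      - (if Even (i.val + j.val + h.val) then
          (a i j + a (h + 1) (i + 1)) * b j h * d (j + 1) (h + 1) else 0)
      = (if Even (i.val + j.val + h.val) then a i j * b j h * d h i else 0)
        + (if Even (i.val + j.val + h.val) then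
            a (h + 1) (i + 1) * b (i + 1) (j + 1) * d (j + 1) (h + 1) else 0) := by
    intro i j h
    split <;> ring
  simp only [key, Finset.sum_add_distrib]
  set g : ZMod n → ZMod n → ZMod n → F := fun i j h =>
    if ¬ Even (i.val + j.val + h.val) then a i j * b j h * d h i else 0 with hg
  have hbij : (∑ i : ZMod n, ∑ j : ZMod n, ∑ h : ZMod n,
        if Even (i.val + j.val + h.val) then
          a (h + 1) (i + 1) * b (i + 1) (j + 1) * d (j + 1) (h + 1) else 0)
      = ∑ i : ZMod n, ∑ j : ZMod n, ∑ h : ZMod n, g i j h := by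
    calc (∑ i : ZMod n, ∑ j : ZMod n, ∑ h : ZMod n,
          if Even (i.val + j.val + h.val) then
            a (h + 1) (i + 1) * b (i + 1) (j + 1) * d (j + 1) (h + 1) else 0)
        = ∑ i : ZMod n, ∑ j : ZMod n, ∑ h : ZMod n, g (h + 1) (i + 1) (j + 1) := by
          refine Finset.sum_congr rfl fun i _ => Finset.sum_congr rfl fun j _ =>
            Finset.sum_congr rfl fun h _ => ?_
          rw [hg]
          simp only []
          congr 1
          rw [eq_iff_iff, parity3 he i j h, not_not]
      _ = ∑ i : ZMod n, ∑ j : ZMod n, ∑ h : ZMod n, g h (i + 1) (j + 1) := by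
          refine Finset.sum_congr rfl fun i _ => Finset.sum_congr rfl fun j _ => ?_
          exact shift_sum (fun h => g h (i + 1) (j + 1))
      _ = ∑ i : ZMod n, ∑ j : ZMod n, ∑ h : ZMod n, g h (i + 1) j := by
          refine Finset.sum_congr rfl fun i _ => ?_
          exact shift_sum (fun j => ∑ h : ZMod n, g h (i + 1) j)
      _ = ∑ i : ZMod n, ∑ j : ZMod n, ∑ h : ZMod n, g h i j :=
          shift_sum (fun i => ∑ j : ZMod n, ∑ h : ZMod n, g h i j)
      _ = ∑ i : ZMod n, ∑ j : ZMod n, ∑ h : ZMod n, g i j h := sum_rot g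
  rw [hbij, ← Finset.sum_add_distrib]
  refine Finset.sum_congr rfl fun i _ => ?_
  rw [← Finset.sum_add_distrib]
  refine Finset.sum_congr rfl fun j _ => ?_
  rw [← Finset.sum_add_distrib]
  refine Finset.sum_congr rfl fun h _ => ?_
  rw [hg]
  by_cases hp : Even (i.val + j.val + h.val) <;> simp [hp]
end
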